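/- arXiv:1801.00186 — 3 statements merged into one kernel-verified Lean document; each statement's English description precedes it below -/
import Mathlib

section
/- Let j < k be nonnegative integers, let 1 ≤ p < ∞ be real, let μ be real, and set 1/p′ = 1 − 1/p. For each integer n large enough that all Gamma arguments below are positive, define ω_{j,k,p,μ}(n) = π^{(k−j)/(2p′)} · (Γ((n−j)/2)/Γ((n−k)/2))^{1/p} · Γ((μ + n/p − k + j/p′)/2) / Γ((μ + n/p − j/p)/2). Then lim_{n→∞} n^{(k−j)/(2p′)} · ω_{j,k,p,μ}(n) = (2π)^{(k−j)/(2p′)} · p^{(k−j)/2}. (Asymptotics, as n → ∞, of the norm of the (j,k)-transform R_{j,k} from L^p_μ(A_{n,j}) to L^p_ν(A_{n,k}).) -/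
open Real Filter Topology

/-!
Log-convexity of `Γ`, applied on `[x, x + 1]` and on `[x + s, x + s + 1]`, gives Wendel's
bounds `(x / (x + s)) ^ (1 - s) ≤ Γ (x + s) / (Γ x * x ^ s) ≤ 1` for `0 ≤ s ≤ 1`, hence
`Γ (x + a) / Γ x ~ x ^ a` for every `a ≥ 0` by the recursion `Γ (x + 1) = x Γ (x)`.
With `a = (k - j) / 2`, the two Gamma quotients in `ω(n)` are then asymptotic to
`(n / 2) ^ (a / p)` and `(n / (2 p)) ^ (-a)`, and the powers of `n` cancel against `n ^ (a / p')`.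
-/

section Wendel

variable {x s : ℝ}

lemma log_Gamma_add_one (hx : 0 < x) : log (Gamma (x + 1)) = log x + log (Gamma x) := by
  rw [Gamma_add_one hx.ne', log_mul hx.ne' (Gamma_pos_of_pos hx).ne']

lemma log_Gamma_add_le (hx : 0 < x) (hs0 : 0 ≤ s) (hs1 : s ≤ 1) :
    log (Gamma (x + s)) ≤ log (Gamma x) + s * log x := by
  have h := convexOn_log_Gamma.2 (Set.mem_Ioi.2 hx) (Set.mem_Ioi.2 (by linarith : 0 < x + 1))
    (sub_nonneg.2 hs1) hs0 (sub_add_cancel 1 s)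
  simp only [smul_eq_mul, Function.comp_apply, log_Gamma_add_one hx] at h
  rw [show (1 - s) * x + s * (x + 1) = x + s by ring] at h
  linear_combination h

lemma log_Gamma_add_ge (hx : 0 < x) (hs0 : 0 ≤ s) (hs1 : s ≤ 1) :
    log x + log (Gamma x) ≤ log (Gamma (x + s)) + (1 - s) * log (x + s) := by
  have hxs : 0 < x + s := by linarith
  have h := convexOn_log_Gamma.2 (Set.mem_Ioi.2 hxs) (Set.mem_Ioi.2 (by linarith : 0 < x + s + 1))
    hs0 (sub_nonneg.2 hs1) (add_sub_cancel s 1)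
  simp only [smul_eq_mul, Function.comp_apply, log_Gamma_add_one hxs] at h
  rw [show s * (x + s) + (1 - s) * (x + s + 1) = x + 1 by ring, log_Gamma_add_one hx] at h
  linear_combination h

theorem tendsto_log_Gamma_add_sub_log_Gamma (hs0 : 0 ≤ s) (hs1 : s ≤ 1) :
    Tendsto (fun x => log (Gamma (x + s)) - log (Gamma x) - s * log x) atTop (𝓝 0) := by
  have hlower : Tendsto (fun x => -((1 - s) * (log (x + s) - log x))) atTop (𝓝 0) := by
    simpa using ((tendsto_log_comp_add_sub_log s).const_mul (1 - s)).neg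
  refine tendsto_of_tendsto_of_tendsto_of_le_of_le' hlower tendsto_const_nhds ?_ ?_
  · filter_upwards [eventually_gt_atTop 0] with x hx
    linear_combination log_Gamma_add_ge hx hs0 hs1
  · filter_upwards [eventually_gt_atTop 0] with x hx
    linear_combination log_Gamma_add_le hx hs0 hs1

theorem tendsto_Gamma_add_div_Gamma_mul_rpow_of_le_one (hs0 : 0 ≤ s) (hs1 : s ≤ 1) :
    Tendsto (fun x => Gamma (x + s) / (Gamma x * x ^ s)) atTop (𝓝 1) := by
  have h := (continuous_exp.tendsto 0).comp (tendsto_log_Gamma_add_sub_log_Gamma hs0 hs1)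
  rw [exp_zero] at h
  refine h.congr' ?_
  filter_upwards [eventually_gt_atTop 0] with x hx
  rw [Function.comp_apply, exp_sub, exp_sub, exp_log (Gamma_pos_of_pos (by linarith)),
    exp_log (Gamma_pos_of_pos hx), mul_comm s, ← rpow_def_of_pos hx, div_div]

end Wendel

theorem tendsto_Gamma_add_div_Gamma_mul_rpow {a : ℝ} (ha : 0 ≤ a) :
    Tendsto (fun x => Gamma (x + a) / (Gamma x * x ^ a)) atTop (𝓝 1) := by
  obtain ⟨m, hm⟩ := exists_nat_ge a
  induction m generalizing a with
  | zero => exact tendsto_Gamma_add_div_Gamma_mul_rpow_of_le_one ha (by simp at hm; linarith)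
  | succ m ih =>
    rcases le_total a 1 with h1 | h1
    · exact tendsto_Gamma_add_div_Gamma_mul_rpow_of_le_one ha h1
    have hprev := ih (a := a - 1) (by linarith) (by push_cast at hm; linarith)
    have hlim := hprev.mul <| (tendsto_const_nhds (x := (1 : ℝ))).add
      ((tendsto_const_nhds (x := a - 1)).div_atTop tendsto_id)
    rw [add_zero, mul_one] at hlim
    refine hlim.congr' ?_
    filter_upwards [eventually_gt_atTop 0] with x hx
    have hxa : 0 < x + (a - 1) := by linarith
    rw [show x + a = x + (a - 1) + 1 by ring, Gamma_add_one hxa.ne',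
      show x ^ a = x ^ (a - 1) * x by rw [← rpow_add_one hx.ne', sub_add_cancel]]
    have := Gamma_pos_of_pos hx
    have := rpow_pos_of_pos hx (a - 1)
    rw [id]
    field_simp

theorem Filter.Tendsto.Gamma_add_div_Gamma_div_rpow {α : Type*} {l : Filter α} {u v : α → ℝ}
    {a c : ℝ} (huv : Tendsto (fun t => u t / v t) l (𝓝 c)) (ha : 0 ≤ a) (hc : 0 < c)
    (hv : Tendsto v l atTop) :
    Tendsto (fun t => Gamma (u t + a) / Gamma (u t) / v t ^ a) l (𝓝 (c ^ a)) := by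
  have hu := hv.num hc huv
  have hlim := ((tendsto_Gamma_add_div_Gamma_mul_rpow ha).comp hu).mul
    (huv.rpow_const (p := a) (Or.inl hc.ne'))
  rw [one_mul] at hlim
  refine hlim.congr' ?_
  filter_upwards [hu.eventually_gt_atTop 0, hv.eventually_gt_atTop 0] with t hut hvt
  have := Gamma_pos_of_pos hut
  have := rpow_pos_of_pos hut a
  have := rpow_pos_of_pos hvt a
  rw [Function.comp_apply, div_rpow hut.le hvt.le]
  field_simp

lemma tendsto_add_mul_div_half (d c : ℝ) :
    Tendsto (fun n : ℕ => (d + c * n) / 2 / ((n : ℝ) / 2)) atTop (𝓝 c) := by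
  simpa using (tendsto_add_mul_div_add_mul_atTop_nhds d 0 c one_ne_zero).congr
    fun n => (div_div_div_cancel_right₀ two_ne_zero _ _).symm

lemma rpow_mul_Gamma_div_Gamma_eq {n X Y a p : ℝ} (hn : 0 < n) (hX : 0 < X) (hY : 0 < Y)
    (ha : 0 ≤ a) :
    n ^ (a * (1 - 1 / p)) *
        (π ^ (a * (1 - 1 / p)) * (Gamma (X + a) / Gamma X) ^ (1 / p) * Gamma Y / Gamma (Y + a))
      = (2 * π) ^ (a * (1 - 1 / p)) * (Gamma (X + a) / Gamma X / (n / 2) ^ a) ^ (1 / p) *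
        (Gamma (Y + a) / Gamma Y / (n / 2) ^ a)⁻¹ := by
  obtain ⟨N, rfl⟩ : ∃ N, n = 2 * N := ⟨n / 2, by ring⟩
  have hN : 0 < N := by linarith
  have hGX := Gamma_pos_of_pos hX
  have hGXa := Gamma_pos_of_pos (add_pos_of_pos_of_nonneg hX ha)
  have hGY := Gamma_pos_of_pos hY
  have hGYa := Gamma_pos_of_pos (add_pos_of_pos_of_nonneg hY ha)
  have hNa := rpow_pos_of_pos hN a
  have := rpow_pos_of_pos hN (a * (1 / p))
  rw [mul_div_cancel_left₀ N two_ne_zero, mul_rpow zero_le_two hN.le,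
    mul_rpow zero_le_two pi_pos.le, div_rpow (div_pos hGXa hGX).le hNa.le, ← rpow_mul hN.le,
    mul_one_sub, rpow_sub hN]
  field_simp

/-- Asymptotics, as `n → ∞`, of the sharp constant `ω_{j,k,p,μ}(n)` (the norm of the
`(j,k)`-transform between weighted `L^p` spaces): here `1/p' = 1 - 1/p`, and
`n^{(k-j)/(2p')} ω_{j,k,p,μ}(n) → (2π)^{(k-j)/(2p')} p^{(k-j)/2}`. -/
theorem stmt3 (j k : ℕ) (hjk : j < k) (p : ℝ) (hp : 1 ≤ p) (μ : ℝ) :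
    Filter.Tendsto
      (fun n : ℕ =>
        (n : ℝ) ^ (((k : ℝ) - j) * (1 - 1 / p) / 2) *
          (Real.pi ^ (((k : ℝ) - j) * (1 - 1 / p) / 2) *
            (Real.Gamma (((n : ℝ) - j) / 2) / Real.Gamma (((n : ℝ) - k) / 2)) ^ (1 / p) *
            Real.Gamma ((μ + (n : ℝ) / p - k + j * (1 - 1 / p)) / 2) /
            Real.Gamma ((μ + (n : ℝ) / p - j / p) / 2)))
      Filter.atTop
      (nhds ((2 * Real.pi) ^ (((k : ℝ) - j) * (1 - 1 / p) / 2) * p ^ (((k : ℝ) - j) / 2))) := by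
  have hp0 : 0 < p := by linarith
  have hp' : 0 < 1 / p := one_div_pos.2 hp0
  set a : ℝ := ((k : ℝ) - j) / 2
  have ha : 0 ≤ a := div_nonneg (sub_nonneg.2 (by exact_mod_cast hjk.le)) zero_le_two
  have hE : ((k : ℝ) - j) * (1 - 1 / p) / 2 = a * (1 - 1 / p) := by ring
  have hv : Tendsto (fun n : ℕ => (n : ℝ) / 2) atTop atTop :=
    tendsto_natCast_atTop_atTop.atTop_div_const two_pos
  have hX : Tendsto (fun n : ℕ => ((n : ℝ) - k) / 2 / ((n : ℝ) / 2)) atTop (𝓝 1) :=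
    (tendsto_add_mul_div_half (-k) 1).congr fun n => by ring
  have hY : Tendsto
      (fun n : ℕ => (μ + (n : ℝ) / p - k + j * (1 - 1 / p)) / 2 / ((n : ℝ) / 2))
      atTop (𝓝 (1 / p)) :=
    (tendsto_add_mul_div_half (μ - k + j * (1 - 1 / p)) (1 / p)).congr fun n => by ring
  have hlim := ((tendsto_const_nhds (x := (2 * π) ^ (a * (1 - 1 / p)))).mul
    ((hX.Gamma_add_div_Gamma_div_rpow ha one_pos hv).rpow_const (Or.inr hp'.le))).mul
    ((hY.Gamma_add_div_Gamma_div_rpow ha hp' hv).inv₀ (by positivity))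
  rw [one_rpow, one_rpow, mul_one, div_rpow zero_le_one hp0.le, one_rpow, inv_div, div_one,
    ← hE] at hlim
  refine hlim.congr' ?_
  filter_upwards [eventually_gt_atTop k, (hv.num hp' hY).eventually_gt_atTop 0] with n hkn hYn
  have hXn : 0 < ((n : ℝ) - k) / 2 := by linarith [(Nat.cast_lt (α := ℝ)).2 hkn]
  rw [hE, show ((n : ℝ) - j) / 2 = ((n : ℝ) - k) / 2 + a by ring,
    show (μ + (n : ℝ) / p - j / p) / 2 = (μ + (n : ℝ) / p - k + j * (1 - 1 / p)) / 2 + a by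
      ring]
  exact (rpow_mul_Gamma_div_Gamma_eq (Nat.cast_pos.2 (Nat.zero_lt_of_lt hkn)) hXn hYn ha).symm
end

section
/- Let 1 ≤ p < ∞ and 1 ≤ q < ∞ be real, and suppose there exists a constant c ∈ (0,∞) such that for every measurable f : ℝ^n → [0,∞] one has ( ∫_{S^{n-1}} ∫_ℝ (Rf(θ,t))^q dt d*θ )^{1/q} ≤ c · ( ∫_{ℝ^n} f(x)^p dx )^{1/p}. Then necessarily 1/q = n/p − (n−1). (Necessity, via the scaling argument, of the exponent relation 1/q = ((n−j)/(n−k))(1/p) − (k−j)/(n−k) for L^p–L^q boundedness of the (j,k)-transform, in the case j = 0, k = n−1.) -/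
/-!
Test the estimate on the dilates `x ↦ 1_{B(0,1)}(x / r)` of the indicator of the unit ball.
Each hyperplane integral scales by `r ^ (n - 1)` and the `t`-integral by `r`, so the left side
scales like `r ^ (n - 1 + 1/q)`, while the right side scales like `r ^ (n/p)`. Both constants are
positive and finite: every hyperplane at distance `≤ 1/2` from the origin meets the unit ball in
an `(n-1)`-ball of radius at least `1/2`. Letting `r → 0` or `r → ∞` forces the exponents to agree.
-/

open MeasureTheory Metric Real
open scoped ENNReal NNReal

noncomputable section

/-- The normalized (probability) surface measure `d*θ` on the unit sphere of
`EuclideanSpace ℝ (Fin n)`. -/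
def sphMeasure (n : ℕ) : Measure (sphere (0 : EuclideanSpace ℝ (Fin n)) 1) :=
  ((volume : Measure (EuclideanSpace ℝ (Fin n))).toSphere Set.univ)⁻¹ •
    (volume : Measure (EuclideanSpace ℝ (Fin n))).toSphere

/-- The hyperplane Radon transform: `Rf(θ,t) = ∫_{θ^⊥} f(tθ + y) dy`, where `θ^⊥` carries its
canonical Lebesgue measure as an (n-1)-dimensional inner product space. -/
def Radon (n : ℕ) (f : EuclideanSpace ℝ (Fin n) → ℝ≥0∞)
    (θ : sphere (0 : EuclideanSpace ℝ (Fin n)) 1) (t : ℝ) : ℝ≥0∞ :=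
  ∫⁻ y : ((ℝ ∙ (θ : EuclideanSpace ℝ (Fin n)))ᗮ),
    f (t • (θ : EuclideanSpace ℝ (Fin n)) + (y : EuclideanSpace ℝ (Fin n)))

theorem ENNReal.eq_of_forall_rpow_mul_le {α β : ℝ} {a b : ℝ≥0∞} (ha : a ≠ 0) (hb : b ≠ ⊤)
    (h : ∀ r : ℝ, 0 < r → ENNReal.ofReal r ^ α * a ≤ ENNReal.ofReal r ^ β * b) : α = β := by
  by_contra hαβ
  obtain ⟨N, hN⟩ := ENNReal.exists_nat_mul_gt ha hb
  have hN0 : 0 < (N : ℝ) := Nat.cast_pos.2 <| Nat.pos_of_ne_zero <| by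
    rintro rfl
    simp at hN
  set r : ℝ := (N : ℝ) ^ (α - β)⁻¹
  have hr : 0 < ENNReal.ofReal r := ENNReal.ofReal_pos.2 (by positivity)
  have hrα : ENNReal.ofReal r ^ α = ENNReal.ofReal r ^ β * N := by
    rw [← sub_add_cancel α β, ENNReal.rpow_add _ _ hr.ne' ENNReal.ofReal_ne_top,
      ENNReal.ofReal_rpow_of_pos (by positivity), Real.rpow_inv_rpow hN0.le (sub_ne_zero.2 hαβ),
      ENNReal.ofReal_natCast, mul_comm]
  have hNa : (N : ℝ≥0∞) * a ≤ b := by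
    have := h r (by positivity)
    rwa [hrα, mul_assoc, ENNReal.mul_le_mul_iff_right
      (ENNReal.rpow_pos hr ENNReal.ofReal_ne_top).ne'
      (ENNReal.rpow_ne_top_of_ne_zero hr.ne' ENNReal.ofReal_ne_top)] at this
  exact hNa.not_gt hN

section AddHaar

variable {F : Type*} [NormedAddCommGroup F] [NormedSpace ℝ F] [MeasurableSpace F] [BorelSpace F]
  [FiniteDimensional ℝ F]

theorem lintegral_comp_inv_smul_addHaar (μ : Measure F) [μ.IsAddHaarMeasure] (g : F → ℝ≥0∞)
    {r : ℝ} (hr : 0 < r) :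
    ∫⁻ x, g (r⁻¹ • x) ∂μ = ENNReal.ofReal r ^ Module.finrank ℝ F * ∫⁻ x, g x ∂μ := by
  have hmap := lintegral_map_equiv g (MeasurableEquiv.smul₀ r⁻¹ (inv_ne_zero hr.ne')) (μ := μ)
  rw [MeasurableEquiv.coe_smul₀, Measure.map_addHaar_smul μ (inv_ne_zero hr.ne'),
    lintegral_smul_measure, inv_pow, inv_inv, abs_of_pos (by positivity),
    ENNReal.ofReal_pow hr.le] at hmap
  exact hmap.symm

end AddHaar

section InnerProduct

variable {E : Type*} [NormedAddCommGroup E] [InnerProductSpace ℝ E] [FiniteDimensional ℝ E]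

theorem Submodule.finrank_orthogonal_span_singleton_eq_sub_one {v : E} (hv : v ≠ 0) :
    Module.finrank ℝ (ℝ ∙ v)ᗮ = Module.finrank ℝ E - 1 := by
  have := Submodule.finrank_add_finrank_orthogonal (ℝ ∙ v)
  rw [finrank_span_singleton hv] at this
  omega

theorem volume_closedBall_zero_eq_euclideanSpace [MeasurableSpace E] [BorelSpace E] (r : ℝ) :
    volume (closedBall (0 : E) r) =
      volume (closedBall (0 : EuclideanSpace ℝ (Fin (Module.finrank ℝ E))) r) := by
  let e := (stdOrthonormalBasis ℝ E).repr
  rw [← e.measurePreserving.measure_preimage measurableSet_closedBall.nullMeasurableSet,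
    e.preimage_closedBall, map_zero]

end InnerProduct

theorem isProbabilityMeasure_sphMeasure {n : ℕ} (hn : n ≠ 0) :
    IsProbabilityMeasure (sphMeasure n) := by
  refine ⟨?_⟩
  rw [sphMeasure, Measure.smul_apply, smul_eq_mul]
  refine ENNReal.inv_mul_cancel ?_ (measure_ne_top _ _)
  rw [Measure.toSphere_apply_univ, finrank_euclideanSpace_fin]
  exact mul_ne_zero (by exact_mod_cast hn) (measure_ball_pos _ _ one_pos).ne'

section Radon

variable {n : ℕ}

theorem finrank_orthogonal_span_of_mem_sphere (θ : sphere (0 : EuclideanSpace ℝ (Fin n)) 1) :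
    Module.finrank ℝ (ℝ ∙ (θ : EuclideanSpace ℝ (Fin n)))ᗮ = n - 1 := by
  rw [Submodule.finrank_orthogonal_span_singleton_eq_sub_one (ne_zero_of_mem_unit_sphere θ),
    finrank_euclideanSpace_fin]

theorem radon_comp_inv_smul (f : EuclideanSpace ℝ (Fin n) → ℝ≥0∞) {r : ℝ} (hr : 0 < r)
    (θ : sphere (0 : EuclideanSpace ℝ (Fin n)) 1) (t : ℝ) :
    Radon n (fun x => f (r⁻¹ • x)) θ t = ENNReal.ofReal r ^ (n - 1) * Radon n f θ (r⁻¹ * t) := by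
  rw [Radon, Radon, ← finrank_orthogonal_span_of_mem_sphere θ,
    ← lintegral_comp_inv_smul_addHaar volume _ hr]
  congr! 2 with y
  rw [smul_add, smul_smul, Submodule.coe_smul]

theorem lintegral_radon_rpow_comp_inv_smul (hn : n ≠ 0) (f : EuclideanSpace ℝ (Fin n) → ℝ≥0∞)
    {q : ℝ} (hq : 0 ≤ q) {r : ℝ} (hr : 0 < r) :
    ∫⁻ θ, ∫⁻ t : ℝ, Radon n (fun x => f (r⁻¹ • x)) θ t ^ q ∂volume ∂(sphMeasure n) =
      ENNReal.ofReal r ^ (((n : ℝ) - 1) * q + 1) *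
        ∫⁻ θ, ∫⁻ t : ℝ, Radon n f θ t ^ q ∂volume ∂(sphMeasure n) := by
  have hr' : ENNReal.ofReal r ≠ 0 := (ENNReal.ofReal_pos.2 hr).ne'
  have hpow : (ENNReal.ofReal r ^ (n - 1)) ^ q = ENNReal.ofReal r ^ (((n : ℝ) - 1) * q) := by
    rw [← ENNReal.rpow_natCast, ← ENNReal.rpow_mul, Nat.cast_sub (Nat.one_le_iff_ne_zero.2 hn),
      Nat.cast_one]
  have hinner : ∀ θ, ∫⁻ t : ℝ, Radon n (fun x => f (r⁻¹ • x)) θ t ^ q =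
      ENNReal.ofReal r ^ (((n : ℝ) - 1) * q + 1) * ∫⁻ t : ℝ, Radon n f θ t ^ q := fun θ => by
    simp_rw [radon_comp_inv_smul f hr θ, ENNReal.mul_rpow_of_nonneg _ _ hq, hpow]
    rw [lintegral_const_mul' _ _ (ENNReal.rpow_ne_top_of_ne_zero hr' ENNReal.ofReal_ne_top),
      ENNReal.rpow_add _ _ hr' ENNReal.ofReal_ne_top, ENNReal.rpow_one, mul_assoc]
    congr 1
    simpa [← smul_eq_mul] using
      lintegral_comp_inv_smul_addHaar volume (fun t : ℝ => Radon n f θ t ^ q) hr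
  rw [lintegral_congr hinner,
    lintegral_const_mul' _ _ (ENNReal.rpow_ne_top_of_ne_zero hr' ENNReal.ofReal_ne_top)]

theorem volume_closedBall_le_radon_indicator_closedBall
    (θ : sphere (0 : EuclideanSpace ℝ (Fin n)) 1) {t : ℝ} (ht : |t| ≤ 2⁻¹) :
    volume (closedBall (0 : EuclideanSpace ℝ (Fin (n - 1))) 2⁻¹) ≤
      Radon n ((closedBall 0 1).indicator 1) θ t := by
  set H := (ℝ ∙ (θ : EuclideanSpace ℝ (Fin n)))ᗮ
  have hsub : closedBall (0 : H) 2⁻¹ ⊆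
      (fun y : H => t • (θ : EuclideanSpace ℝ (Fin n)) + y) ⁻¹' closedBall 0 1 := by
    intro y hy
    have hy : ‖(y : EuclideanSpace ℝ (Fin n))‖ ≤ 2⁻¹ := by simpa using hy
    have hperp : inner ℝ (t • (θ : EuclideanSpace ℝ (Fin n))) (y : EuclideanSpace ℝ (Fin n)) = 0 :=
      Submodule.inner_right_of_mem_orthogonal
        (Submodule.smul_mem _ t (Submodule.mem_span_singleton_self _)) y.2
    have hpyth := norm_add_sq_eq_norm_sq_add_norm_sq_real hperp
    rw [norm_smul, norm_eq_of_mem_sphere θ, mul_one, Real.norm_eq_abs] at hpyth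
    simp only [Set.mem_preimage, mem_closedBall_zero_iff]
    nlinarith [norm_nonneg (t • (θ : EuclideanSpace ℝ (Fin n)) + y), abs_nonneg t,
      norm_nonneg (y : EuclideanSpace ℝ (Fin n)), mul_le_mul ht ht (abs_nonneg t) (by norm_num),
      mul_le_mul hy hy (norm_nonneg _) (by norm_num)]
  have hmeas : MeasurableSet
      ((fun y : H => t • (θ : EuclideanSpace ℝ (Fin n)) + y) ⁻¹' closedBall 0 1) :=
    (isClosed_closedBall.preimage (by fun_prop)).measurableSet
  calc volume (closedBall (0 : EuclideanSpace ℝ (Fin (n - 1))) 2⁻¹)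
      = volume (closedBall (0 : H) 2⁻¹) := by
        rw [volume_closedBall_zero_eq_euclideanSpace (E := H), show Module.finrank ℝ H = n - 1 from
          finrank_orthogonal_span_of_mem_sphere θ]
    _ ≤ volume ((fun y : H => t • (θ : EuclideanSpace ℝ (Fin n)) + y) ⁻¹' closedBall 0 1) :=
        measure_mono hsub
    _ = Radon n ((closedBall 0 1).indicator 1) θ t := by
        rw [← lintegral_indicator_one hmeas]
        rfl

theorem lintegral_radon_rpow_indicator_closedBall_ne_zero (hn : n ≠ 0) {q : ℝ} (hq : 0 ≤ q) :
    ∫⁻ θ, ∫⁻ t : ℝ, Radon n ((closedBall 0 1).indicator 1) θ t ^ q ∂volume ∂(sphMeasure n) ≠ 0 := by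
  have := isProbabilityMeasure_sphMeasure hn
  set v := volume (closedBall (0 : EuclideanSpace ℝ (Fin (n - 1))) 2⁻¹)
  have hv : 0 < v ^ q :=
    ENNReal.rpow_pos (measure_closedBall_pos _ _ (by norm_num)) measure_closedBall_lt_top.ne
  have hθ : ∀ θ, v ^ q ≤ ∫⁻ t : ℝ, Radon n ((closedBall 0 1).indicator 1) θ t ^ q := fun θ =>
    calc v ^ q = ∫⁻ _ in Set.Icc (-2⁻¹ : ℝ) 2⁻¹, v ^ q := by
          rw [setLIntegral_const, Real.volume_Icc]
          norm_num
      _ ≤ ∫⁻ t in Set.Icc (-2⁻¹ : ℝ) 2⁻¹, Radon n ((closedBall 0 1).indicator 1) θ t ^ q :=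
          setLIntegral_mono' measurableSet_Icc fun t ht =>
            ENNReal.rpow_le_rpow (volume_closedBall_le_radon_indicator_closedBall θ
              (abs_le.2 ht)) hq
      _ ≤ _ := setLIntegral_le_lintegral _ _
  refine (hv.trans_le ?_).ne'
  calc v ^ q = ∫⁻ _, v ^ q ∂(sphMeasure n) := by simp
    _ ≤ _ := lintegral_mono hθ

end Radon

/-- Necessity of the exponent relation `1/q = n/p - (n-1)` for an `L^p → L^q` estimate for the
hyperplane Radon transform (scaling argument, case `j = 0`, `k = n-1`). -/
theorem stmt4 (n : ℕ) (hn : 2 ≤ n) (p q : ℝ) (hp : 1 ≤ p) (hq : 1 ≤ q)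
    (h : ∃ c : ℝ, 0 < c ∧ ∀ f : EuclideanSpace ℝ (Fin n) → ℝ≥0∞, Measurable f →
      (∫⁻ θ, ∫⁻ t : ℝ, Radon n f θ t ^ q ∂volume ∂(sphMeasure n)) ^ (1 / q) ≤
        ENNReal.ofReal c * (∫⁻ x, f x ^ p) ^ (1 / p)) :
    1 / q = (n : ℝ) / p - ((n : ℝ) - 1) := by
  obtain ⟨c, -, H⟩ := h
  have hn0 : n ≠ 0 := by omega
  have hp0 : 0 < p := by linarith
  have hq0 : 0 < q := by linarith
  set f : EuclideanSpace ℝ (Fin n) → ℝ≥0∞ := (closedBall 0 1).indicator 1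
  set A := ∫⁻ θ, ∫⁻ t : ℝ, Radon n f θ t ^ q ∂volume ∂(sphMeasure n)
  set B := ∫⁻ x, f x ^ p
  have hA : A ^ (1 / q) ≠ 0 := fun h0 => lintegral_radon_rpow_indicator_closedBall_ne_zero hn0
    hq0.le ((ENNReal.rpow_eq_zero_iff_of_pos (by positivity)).1 h0)
  have hB : B ≠ ⊤ := by
    have hfp : (fun x => f x ^ p) = f := funext fun x => by
      by_cases hx : x ∈ closedBall 0 1 <;> simp [f, hx, hp0]
    rw [show B = ∫⁻ x, f x by rw [← hfp], lintegral_indicator_one measurableSet_closedBall]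
    exact measure_closedBall_lt_top.ne
  suffices (n : ℝ) - 1 + 1 / q = n / p by linarith
  have hK : ENNReal.ofReal c * B ^ (1 / p) ≠ ⊤ :=
    ENNReal.mul_ne_top ENNReal.ofReal_ne_top (ENNReal.rpow_ne_top_of_nonneg (by positivity) hB)
  refine ENNReal.eq_of_forall_rpow_mul_le hA hK fun r hr => ?_
  have hscaled := H (fun x => f (r⁻¹ • x)) ((measurable_one.indicator measurableSet_closedBall).comp
    (measurable_const_smul r⁻¹))
  rw [lintegral_radon_rpow_comp_inv_smul hn0 f hq0.le hr,
    lintegral_comp_inv_smul_addHaar volume (fun x => f x ^ p) hr, finrank_euclideanSpace_fin,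
    ← ENNReal.rpow_natCast, ENNReal.mul_rpow_of_nonneg _ _ (by positivity),
    ENNReal.mul_rpow_of_nonneg _ _ (by positivity), ← ENNReal.rpow_mul,
    ← ENNReal.rpow_mul] at hscaled
  rwa [show (((n : ℝ) - 1) * q + 1) * (1 / q) = n - 1 + 1 / q by field_simp, mul_one_div,
    mul_left_comm] at hscaled
end
end

section
/- Let f₀(x) = (1 + |x|²)^{−n/2} for x ∈ ℝ^n, and set Ω = ( σ_{n-1}^n / (2 σ_n^{n−1}) )^{1/(n+1)}. Then ( ∫_{S^{n-1}} ∫_ℝ (Rf₀(θ,t))^{n+1} dt d*θ )^{1/(n+1)} = Ω · ( ∫_{ℝ^n} f₀(x)^{(n+1)/n} dx )^{n/(n+1)}, both sides being finite and positive. (Case j = 0, k = n−1 of the paper's Lemma showing that f₀ realizes equality in the conjectured sharp L^p–L^q estimate for the (j,k)-transform.) -/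
/-!
Writing `(a + |v|²)^{-s}` as the Laplace transform `Γ(s)⁻¹ ∫₀^∞ t^{s-1} e^{-(a+|v|²)t} dt` and
integrating the Gaussian in `v` first gives
`∫_{ℝ^m} (a + |v|²)^{-s} dv = a^{m/2-s} π^{m/2} Γ(s - m/2) / Γ(s)`.
Since `1 + |tθ + y|² = (1 + t²) + |y|²` for `y ⊥ θ`, this formula in dimension `n - 1` shows that
`Rf₀(θ,t) = (σ_{n-1}/2) (1 + t²)^{-1/2}` for every `θ`, and in dimensions `1` and `n` it evaluates
both sides as explicit powers of `σ_{n-1}/2` and `σ_n/2`.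
-/

open MeasureTheory Metric Real
open scoped ENNReal NNReal

noncomputable section

/-- `σ_m = 2π^{(m+1)/2}/Γ((m+1)/2)`, the surface area of the unit sphere `S^m`. -/
def sphereArea (m : ℕ) : ℝ :=
  2 * Real.pi ^ (((m : ℝ) + 1) / 2) / Real.Gamma (((m : ℝ) + 1) / 2)

open Set

-- A nonzero Bochner integral certifies integrability.
theorem lintegral_ofReal_eq_ofReal_of_integral_eq {α : Type*} [MeasurableSpace α]
    {μ : Measure α} {f : α → ℝ} {c : ℝ} (hf : 0 ≤ᵐ[μ] f) (hc : 0 < c)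
    (h : ∫ x, f x ∂μ = c) : ∫⁻ x, ENNReal.ofReal (f x) ∂μ = ENNReal.ofReal c := by
  rw [← h, ofReal_integral_eq_lintegral_ofReal (.of_integral_ne_zero (h ▸ hc.ne')) hf]

theorem lintegral_Ioi_ofReal_rpow_mul_exp_neg_mul {a r : ℝ} (ha : 0 < a) (hr : 0 < r) :
    ∫⁻ t in Ioi (0 : ℝ), ENNReal.ofReal (t ^ (a - 1) * rexp (-(r * t))) =
      ENNReal.ofReal ((1 / r) ^ a * Gamma a) := by
  refine lintegral_ofReal_eq_ofReal_of_integral_eq ?_ (by have := Gamma_pos_of_pos ha; positivity)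
    (integral_rpow_mul_exp_neg_mul_Ioi ha hr)
  filter_upwards [ae_restrict_mem measurableSet_Ioi] with t (ht : 0 < t)
  positivity

theorem ofReal_rpow_neg_eq_lintegral {a s : ℝ} (ha : 0 < a) (hs : 0 < s) :
    ENNReal.ofReal (a ^ (-s)) = (ENNReal.ofReal (Gamma s))⁻¹ *
      ∫⁻ t in Ioi (0 : ℝ), ENNReal.ofReal (t ^ (s - 1) * rexp (-(a * t))) := by
  have hΓ := Gamma_pos_of_pos hs
  rw [lintegral_Ioi_ofReal_rpow_mul_exp_neg_mul hs ha, one_div, inv_rpow ha.le, ← rpow_neg ha.le,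
    ENNReal.ofReal_mul (by positivity), mul_left_comm,
    ENNReal.inv_mul_cancel (by positivity) ENNReal.ofReal_ne_top, mul_one]

section

variable {F : Type*} [NormedAddCommGroup F] [InnerProductSpace ℝ F] [FiniteDimensional ℝ F]
  [MeasurableSpace F] [BorelSpace F]

theorem lintegral_ofReal_exp_neg_mul_norm_sq {b : ℝ} (hb : 0 < b) :
    ∫⁻ v : F, ENNReal.ofReal (rexp (-b * ‖v‖ ^ 2)) =
      ENNReal.ofReal ((π / b) ^ ((Module.finrank ℝ F : ℝ) / 2)) :=
  lintegral_ofReal_eq_ofReal_of_integral_eq (.of_forall fun _ => (exp_pos _).le)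
    (by have := pi_pos; positivity) (GaussianFourier.integral_rexp_neg_mul_sq_norm hb)

theorem lintegral_ofReal_rpow_mul_exp_neg_add_norm_sq_mul {a s t : ℝ} (ht : 0 < t) :
    ∫⁻ v : F, ENNReal.ofReal (t ^ (s - 1) * rexp (-((a + ‖v‖ ^ 2) * t))) =
      ENNReal.ofReal (π ^ ((Module.finrank ℝ F : ℝ) / 2)) *
        ENNReal.ofReal (t ^ (s - (Module.finrank ℝ F : ℝ) / 2 - 1) * rexp (-(a * t))) := by
  set m : ℝ := (Module.finrank ℝ F : ℝ)
  have hsplit : ∀ v : F, ENNReal.ofReal (t ^ (s - 1) * rexp (-((a + ‖v‖ ^ 2) * t))) =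
      ENNReal.ofReal (t ^ (s - 1) * rexp (-(a * t))) * ENNReal.ofReal (rexp (-t * ‖v‖ ^ 2)) := by
    intro v
    rw [← ENNReal.ofReal_mul (by positivity), mul_assoc, ← exp_add]
    ring_nf
  have hpow : (π / t) ^ (m / 2) * t ^ (s - 1) = π ^ (m / 2) * t ^ (s - m / 2 - 1) := by
    rw [div_rpow pi_pos.le ht.le, show s - m / 2 - 1 = s - 1 - m / 2 by ring, rpow_sub ht (s - 1)]
    ring
  rw [lintegral_congr hsplit, lintegral_const_mul' _ _ ENNReal.ofReal_ne_top,
    lintegral_ofReal_exp_neg_mul_norm_sq ht, ← ENNReal.ofReal_mul (by positivity),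
    ← ENNReal.ofReal_mul (by positivity), mul_comm, ← mul_assoc, hpow, mul_assoc]

theorem lintegral_ofReal_add_norm_sq_rpow_neg {a s : ℝ} (ha : 0 < a)
    (hs : (Module.finrank ℝ F : ℝ) < 2 * s) :
    ∫⁻ v : F, ENNReal.ofReal ((a + ‖v‖ ^ 2) ^ (-s)) =
      ENNReal.ofReal (a ^ ((Module.finrank ℝ F : ℝ) / 2 - s) *
        (π ^ ((Module.finrank ℝ F : ℝ) / 2) * Gamma (s - (Module.finrank ℝ F : ℝ) / 2) /
          Gamma s)) := by
  set m : ℝ := (Module.finrank ℝ F : ℝ)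
  have hs0 : 0 < s := by linarith [(Nat.cast_nonneg _ : (0 : ℝ) ≤ m)]
  have hsm : 0 < s - m / 2 := by linarith
  have hΓ := Gamma_pos_of_pos hs0
  have hΓsm := Gamma_pos_of_pos hsm
  calc ∫⁻ v : F, ENNReal.ofReal ((a + ‖v‖ ^ 2) ^ (-s))
      = ∫⁻ v : F, (ENNReal.ofReal (Gamma s))⁻¹ *
          ∫⁻ t in Ioi (0 : ℝ), ENNReal.ofReal (t ^ (s - 1) * rexp (-((a + ‖v‖ ^ 2) * t))) :=
        lintegral_congr fun v => ofReal_rpow_neg_eq_lintegral (by positivity) hs0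
    _ = (ENNReal.ofReal (Gamma s))⁻¹ * ∫⁻ t in Ioi (0 : ℝ),
          ENNReal.ofReal (π ^ (m / 2)) *
            ENNReal.ofReal (t ^ (s - m / 2 - 1) * rexp (-(a * t))) := by
        rw [lintegral_const_mul' _ _ (ENNReal.inv_ne_top.2 (ENNReal.ofReal_pos.2 hΓ).ne'),
          lintegral_lintegral_swap (by fun_prop)]
        congr 1
        exact setLIntegral_congr_fun measurableSet_Ioi fun t ht =>
          lintegral_ofReal_rpow_mul_exp_neg_add_norm_sq_mul ht
    _ = ENNReal.ofReal (a ^ (m / 2 - s) * (π ^ (m / 2) * Gamma (s - m / 2) / Gamma s)) := by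
        rw [lintegral_const_mul' _ _ ENNReal.ofReal_ne_top,
          lintegral_Ioi_ofReal_rpow_mul_exp_neg_mul hsm ha, ← ENNReal.ofReal_mul (by positivity),
          ← ENNReal.ofReal_inv_of_pos hΓ, ← ENNReal.ofReal_mul (by positivity), one_div,
          inv_rpow ha.le, ← rpow_neg ha.le, neg_sub]
        ring_nf

end

theorem norm_smul_add_sq_of_mem_orthogonal {E : Type*} [NormedAddCommGroup E]
    [InnerProductSpace ℝ E] {θ y : E} (hθ : ‖θ‖ = 1) (hy : y ∈ (ℝ ∙ θ)ᗮ) (t : ℝ) :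
    ‖t • θ + y‖ ^ 2 = t ^ 2 + ‖y‖ ^ 2 := by
  rw [norm_add_sq_real, real_inner_smul_left,
    Submodule.mem_orthogonal_singleton_iff_inner_right.1 hy, norm_smul, hθ]
  simp

theorem sphereArea_div_two (k : ℕ) :
    sphereArea k / 2 = π ^ ((k : ℝ) / 2) * Gamma (1 / 2) / Gamma ((k + 1) / 2) := by
  rw [sphereArea, Gamma_one_half_eq, sqrt_eq_rpow, ← rpow_add pi_pos]
  ring_nf

theorem sphereArea_div_sphereArea_sub_one {n : ℕ} (hn : n ≠ 0) :
    sphereArea n / sphereArea (n - 1) = π ^ (1 / 2 : ℝ) * Gamma (n / 2) / Gamma ((n + 1) / 2) := by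
  have hcast : ((n - 1 : ℕ) : ℝ) + 1 = n := by
    rw [Nat.cast_sub (Nat.one_le_iff_ne_zero.2 hn)]; ring
  have hπ : π ^ (((n : ℝ) + 1) / 2) = π ^ (1 / 2 : ℝ) * π ^ ((n : ℝ) / 2) := by
    rw [← rpow_add pi_pos]; ring_nf
  have := Gamma_pos_of_pos (by positivity : (0 : ℝ) < n / 2)
  have := Gamma_pos_of_pos (by positivity : (0 : ℝ) < (n + 1) / 2)
  rw [sphereArea, sphereArea, hcast, hπ]
  field_simp

theorem sphereArea_pos (k : ℕ) : 0 < sphereArea k := by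
  have := Gamma_pos_of_pos (by positivity : (0 : ℝ) < ((k : ℝ) + 1) / 2)
  rw [sphereArea]
  positivity

theorem radon_one_add_norm_sq_rpow {n : ℕ} (θ : sphere (0 : EuclideanSpace ℝ (Fin n)) 1)
    (t : ℝ) :
    Radon n (fun x => ENNReal.ofReal ((1 + ‖x‖ ^ 2) ^ (-(n : ℝ) / 2))) θ t =
      ENNReal.ofReal ((1 + t ^ 2) ^ (-(1 / 2) : ℝ) * (sphereArea (n - 1) / 2)) := by
  have hθ : ‖(θ : EuclideanSpace ℝ (Fin n))‖ = 1 := mem_sphere_zero_iff_norm.1 θ.2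
  have hdim := Submodule.finrank_add_finrank_orthogonal (ℝ ∙ (θ : EuclideanSpace ℝ (Fin n)))
  rw [finrank_span_singleton (ne_zero_of_norm_ne_zero (by simp [hθ])),
    finrank_euclideanSpace_fin] at hdim
  have hdim' : (Module.finrank ℝ (ℝ ∙ (θ : EuclideanSpace ℝ (Fin n)))ᗮ : ℝ) = n - 1 := by
    have := congrArg (fun k : ℕ => (k : ℝ)) hdim
    push_cast at this
    linarith
  have hcast : ((n - 1 : ℕ) : ℝ) = n - 1 := by rw [Nat.cast_sub (by omega), Nat.cast_one]
  calc Radon n (fun x => ENNReal.ofReal ((1 + ‖x‖ ^ 2) ^ (-(n : ℝ) / 2))) θ t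
      = ∫⁻ y : (ℝ ∙ (θ : EuclideanSpace ℝ (Fin n)))ᗮ,
          ENNReal.ofReal ((1 + t ^ 2 + ‖y‖ ^ 2) ^ (-((n : ℝ) / 2))) := by
        refine lintegral_congr fun y => ?_
        dsimp only
        rw [norm_smul_add_sq_of_mem_orthogonal hθ y.2, neg_div, add_assoc]
        rfl
    _ = _ := by
        rw [lintegral_ofReal_add_norm_sq_rpow_neg (by positivity) (by rw [hdim']; linarith),
          hdim', sphereArea_div_two, hcast]
        ring_nf

theorem lintegral_radon_one_add_norm_sq_rpow_rpow {n : ℕ} (hn : n ≠ 0)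
    (θ : sphere (0 : EuclideanSpace ℝ (Fin n)) 1) :
    ∫⁻ t : ℝ, Radon n (fun x => ENNReal.ofReal ((1 + ‖x‖ ^ 2) ^ (-(n : ℝ) / 2))) θ t ^
        ((n : ℝ) + 1) =
      ENNReal.ofReal ((sphereArea (n - 1) / 2) ^ ((n : ℝ) + 1) *
        (sphereArea n / sphereArea (n - 1))) := by
  have hσ : 0 < sphereArea (n - 1) / 2 := half_pos (sphereArea_pos _)
  have hn1 : (1 : ℝ) ≤ n := Nat.one_le_cast.2 (Nat.one_le_iff_ne_zero.2 hn)
  have hpow : ∀ t : ℝ, ENNReal.ofReal ((1 + t ^ 2) ^ (-(1 / 2) : ℝ) * (sphereArea (n - 1) / 2)) ^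
      ((n : ℝ) + 1) = ENNReal.ofReal ((sphereArea (n - 1) / 2) ^ ((n : ℝ) + 1)) *
        ENNReal.ofReal ((1 + ‖t‖ ^ 2) ^ (-(((n : ℝ) + 1) / 2))) := by
    intro t
    rw [ENNReal.ofReal_rpow_of_pos (by positivity), mul_rpow (by positivity) hσ.le,
      ← rpow_mul (by positivity), ENNReal.ofReal_mul (by positivity), mul_comm, norm_eq_abs,
      sq_abs]
    ring_nf
  have hdim : (Module.finrank ℝ ℝ : ℝ) < 2 * (((n : ℝ) + 1) / 2) := by
    rw [Module.finrank_self]; push_cast; linarith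
  simp_rw [radon_one_add_norm_sq_rpow, hpow]
  rw [lintegral_const_mul' _ _ ENNReal.ofReal_ne_top,
    lintegral_ofReal_add_norm_sq_rpow_neg one_pos hdim, Module.finrank_self, one_rpow, one_mul,
    ← ENNReal.ofReal_mul (by positivity), sphereArea_div_sphereArea_sub_one hn]
  congr 2
  ring_nf

theorem lintegral_one_add_norm_sq_rpow_rpow {n : ℕ} (hn : n ≠ 0) :
    ∫⁻ x : EuclideanSpace ℝ (Fin n), ENNReal.ofReal ((1 + ‖x‖ ^ 2) ^ (-(n : ℝ) / 2)) ^
        (((n : ℝ) + 1) / n) = ENNReal.ofReal (sphereArea n / 2) := by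
  have hpow : ∀ x : EuclideanSpace ℝ (Fin n),
      ENNReal.ofReal ((1 + ‖x‖ ^ 2) ^ (-(n : ℝ) / 2)) ^ (((n : ℝ) + 1) / n) =
        ENNReal.ofReal ((1 + ‖x‖ ^ 2) ^ (-(((n : ℝ) + 1) / 2))) := by
    intro x
    rw [ENNReal.ofReal_rpow_of_pos (by positivity), ← rpow_mul (by positivity)]
    congr 3
    field_simp
  rw [lintegral_congr hpow,
    lintegral_ofReal_add_norm_sq_rpow_neg one_pos (by rw [finrank_euclideanSpace_fin]; linarith),
    finrank_euclideanSpace_fin, sphereArea_div_two, one_rpow, one_mul]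
  congr 3
  ring_nf

instance {n : ℕ} [NeZero n] : IsProbabilityMeasure (sphMeasure n) :=
  have : NeZero (volume : Measure (EuclideanSpace ℝ (Fin n))).toSphere :=
    ⟨Measure.toSphere_ne_zero _⟩
  isProbabilityMeasureSMul

theorem half_rpow_succ_mul_div_rpow_eq {a b : ℝ} {n : ℕ} (hn : n ≠ 0) (ha : 0 < a) (hb : 0 < b) :
    ((a / 2) ^ ((n : ℝ) + 1) * (b / a)) ^ (1 / ((n : ℝ) + 1)) =
      (a ^ n / (2 * b ^ (n - 1))) ^ (1 / ((n : ℝ) + 1)) * (b / 2) ^ ((n : ℝ) / ((n : ℝ) + 1)) := by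
  obtain ⟨k, rfl⟩ := Nat.exists_eq_succ_of_ne_zero hn
  rw [div_eq_mul_one_div ((k.succ : ℕ) : ℝ), rpow_mul (by positivity), rpow_natCast,
    ← mul_rpow (by positivity) (by positivity), ← Nat.cast_succ, rpow_natCast]
  congr 1
  simp only [Nat.succ_sub_one, pow_succ]
  field_simp
  ring

/-- The function `f₀(x) = (1+|x|²)^{-n/2}` realizes equality in the sharp `L^{(n+1)/n} → L^{n+1}`
estimate for the hyperplane Radon transform, both sides being finite and positive. -/
theorem stmt6 (n : ℕ) (hn : 2 ≤ n) (Ω : ℝ)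
    (hΩ : Ω = (sphereArea (n - 1) ^ n / (2 * sphereArea n ^ (n - 1))) ^ (1 / ((n : ℝ) + 1)))
    (f₀ : EuclideanSpace ℝ (Fin n) → ℝ≥0∞)
    (hf₀ : f₀ = fun x => ENNReal.ofReal ((1 + ‖x‖ ^ 2) ^ (-(n : ℝ) / 2)))
    (A B : ℝ≥0∞)
    (hA : A = (∫⁻ θ, ∫⁻ t : ℝ, Radon n f₀ θ t ^ ((n : ℝ) + 1) ∂volume ∂(sphMeasure n)) ^
      (1 / ((n : ℝ) + 1)))
    (hB : B = (∫⁻ x, f₀ x ^ (((n : ℝ) + 1) / n)) ^ ((n : ℝ) / ((n : ℝ) + 1))) :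
    A = ENNReal.ofReal Ω * B ∧ 0 < A ∧ A < ⊤ ∧ 0 < B ∧ B < ⊤ := by
  have hn0 : n ≠ 0 := by omega
  have : NeZero n := ⟨hn0⟩
  have ha := sphereArea_pos (n - 1)
  have hb := sphereArea_pos n
  have hA' : A = ENNReal.ofReal (((sphereArea (n - 1) / 2) ^ ((n : ℝ) + 1) *
      (sphereArea n / sphereArea (n - 1))) ^ (1 / ((n : ℝ) + 1))) := by
    simp_rw [hA, hf₀, lintegral_radon_one_add_norm_sq_rpow_rpow hn0, lintegral_const,
      measure_univ, mul_one]
    exact ENNReal.ofReal_rpow_of_pos (by positivity)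
  have hB' : B = ENNReal.ofReal ((sphereArea n / 2) ^ ((n : ℝ) / ((n : ℝ) + 1))) := by
    rw [hB, hf₀, lintegral_one_add_norm_sq_rpow_rpow hn0,
      ENNReal.ofReal_rpow_of_pos (by positivity)]
  rw [hA', hB', hΩ, ← ENNReal.ofReal_mul (by positivity), half_rpow_succ_mul_div_rpow_eq hn0 ha hb]
  refine ⟨rfl, ?_, ENNReal.ofReal_lt_top, ?_, ENNReal.ofReal_lt_top⟩ <;>
    exact ENNReal.ofReal_pos.2 (by positivity)
end
end
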